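/- arXiv:2007.14569 — 2 statements merged into one kernel-verified Lean document; each statement's English description precedes it below -/
import Mathlib

section
/- With the same setup (f four-wise independent mapping U to {±1}, Y(S) = Σ_{s∈S} f(s), d = |A △ B|), the estimator D = (Y(A) − Y(B))^2 satisfies E[D^2] = 3d^2 − 2d, hence Var[D] = 2d^2 − 2d. -/
/-!
Write `Y(A) - Y(B) = Z := ∑_{s ∈ A △ B} ε s * f s` with signs `ε s = ±1`. When one more term
`c * X` is added to such a sum `Z`, four-wise independence and `E X = 0` kill `E[Z³ X]` and `E[Z X]`
(expand `Z³` into products of at most three other hash values, each independent of `X`), while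
`X² = 1`. Hence `E (Z + c X)² = E Z² + c²` and `E (Z + c X)⁴ = E Z⁴ + 6 c² E Z² + c⁴`, and
induction gives `E Z² = ∑ c²` and `E Z⁴ = 3 (∑ c²)² - 2 ∑ c⁴`, which is `3 d² - 2 d` for `c = ε`.
-/

open MeasureTheory ProbabilityTheory

theorem Finset.sum_sub_sum_eq_sum_symmDiff {α R : Type*} [DecidableEq α] [CommRing R]
    (A B : Finset α) (f : α → R) :
    ∑ a ∈ A, f a - ∑ a ∈ B, f a = ∑ a ∈ symmDiff A B, (if a ∈ A then 1 else -1) * f a := by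
  rw [← Finset.sum_sdiff_sub_sum_sdiff, symmDiff_def, Finset.sup_eq_union,
    Finset.sum_union disjoint_sdiff_sdiff, sub_eq_add_neg, ← Finset.sum_neg_distrib]
  congr 1 <;> refine Finset.sum_congr rfl fun a ha => ?_ <;> simp [(Finset.mem_sdiff.1 ha)]

lemma integral_eq_zero_of_pm_one_of_measure_eq_half {Ω : Type*} [MeasurableSpace Ω]
    {μ : Measure Ω} [IsProbabilityMeasure μ] {Y : Ω → ℝ} (hY : Measurable Y)
    (hval : ∀ ω, Y ω = 1 ∨ Y ω = -1) (hhalf : μ {ω | Y ω = 1} = 1 / 2) :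
    ∫ ω, Y ω ∂μ = 0 := by
  set E := {ω | Y ω = 1}
  have hE : MeasurableSet E := hY (measurableSet_singleton 1)
  have hY_eq : Y = fun ω => 2 * E.indicator 1 ω - 1 := by
    funext ω
    rcases hval ω with h | h <;> simp [E, Set.indicator, h] <;> norm_num
  rw [hY_eq, integral_sub ((integrable_const 1).indicator hE |>.const_mul 2) (integrable_const 1),
    integral_const_mul, integral_indicator_one hE, measureReal_def, hhalf]
  simp

def KWiseIndepFun {ι Ω β : Type*} [MeasurableSpace Ω] [MeasurableSpace β] (k : ℕ)
    (X : ι → Ω → β) (μ : Measure Ω) : Prop :=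
  ∀ T : Finset ι, T.card ≤ k → iIndepFun (fun s : T => X s) μ

def weightedSum {ι Ω : Type*} (c : ι → ℝ) (X : ι → Ω → ℝ) (T : Finset ι) (ω : Ω) : ℝ :=
  ∑ t ∈ T, c t * X t ω

lemma weightedSum_insert {ι Ω : Type*} [DecidableEq ι] {c : ι → ℝ} {X : ι → Ω → ℝ}
    {T : Finset ι} {s : ι} (hs : s ∉ T) (ω : Ω) :
    weightedSum c X (insert s T) ω = c s * X s ω + weightedSum c X T ω :=
  Finset.sum_insert hs

section weightedSum

variable {ι Ω : Type*} [MeasurableSpace Ω] {μ : Measure Ω} {X : ι → Ω → ℝ}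

lemma integrable_weightedSum_pow [IsFiniteMeasure μ] (hmeas : ∀ s, Measurable (X s))
    (habs : ∀ s ω, |X s ω| = 1) (c : ι → ℝ) (T : Finset ι) (a : ℕ) :
    Integrable (fun ω => weightedSum c X T ω ^ a) μ := by
  refine Integrable.of_bound (by unfold weightedSum; fun_prop) ((∑ t ∈ T, |c t|) ^ a)
    (ae_of_all _ fun ω => ?_)
  rw [Real.norm_eq_abs, abs_pow]
  gcongr
  exact (Finset.abs_sum_le_sum_abs _ _).trans (by simp [abs_mul, habs])

lemma integrable_weightedSum_pow_mul [IsFiniteMeasure μ] (hmeas : ∀ s, Measurable (X s))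
    (habs : ∀ s ω, |X s ω| = 1) (c : ι → ℝ) (T : Finset ι) (a : ℕ) (s : ι) :
    Integrable (fun ω => weightedSum c X T ω ^ a * X s ω) μ :=
  (integrable_weightedSum_pow hmeas habs c T a).mul_bdd (hmeas s).aestronglyMeasurable
    (ae_of_all _ fun ω => (habs s ω).le)

end weightedSum

namespace KWiseIndepFun

variable {ι Ω β : Type*} [MeasurableSpace Ω] [MeasurableSpace β] {k : ℕ} {μ : Measure Ω}

lemma mono {X : ι → Ω → β} {j : ℕ} (h : KWiseIndepFun k X μ) (hjk : j ≤ k) :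
    KWiseIndepFun j X μ :=
  fun T hT => h T (hT.trans hjk)

lemma indepFun_restrict [DecidableEq ι] {X : ι → Ω → β} (h : KWiseIndepFun k X μ)
    (hmeas : ∀ s, Measurable (X s)) {J : Finset ι} {s : ι} (hs : s ∉ J) (hJ : J.card < k) :
    IndepFun (fun ω (j : J) => X j ω) (X s) μ := by
  set T := insert s J
  have hT : iIndepFun (fun t : T => X t) μ := h T (by rw [Finset.card_insert_of_notMem hs]; omega)
  let s' : T := ⟨s, Finset.mem_insert_self s J⟩
  have hsplit := hT.indepFun_finset {s'}ᶜ {s'} disjoint_compl_left fun t => hmeas t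
  have hJT : ∀ j : J, (⟨j, Finset.mem_insert_of_mem j.2⟩ : T) ∈ ({s'}ᶜ : Finset T) := fun j => by
    simpa [s', Subtype.ext_iff] using fun hj : (j : ι) = s => hs (hj ▸ j.2)
  exact hsplit.comp (φ := fun v j => v ⟨_, hJT j⟩)
    (ψ := fun v => v ⟨s', Finset.mem_singleton_self _⟩) (_mγ' := ‹_›) (by fun_prop) (by fun_prop)

variable {X : ι → Ω → ℝ}

lemma integral_prod_mul_eq_zero [DecidableEq ι] (h : KWiseIndepFun k X μ)
    (hmeas : ∀ s, Measurable (X s)) {s : ι} (hmean : ∫ ω, X s ω ∂μ = 0) {n : ℕ} (hn : n < k)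
    (p : Fin n → ι) (hp : ∀ i, p i ≠ s) : ∫ ω, (∏ i, X (p i) ω) * X s ω ∂μ = 0 := by
  set J := Finset.univ.image p
  have hs : s ∉ J := by simpa [J] using hp
  have hJ : J.card < k := (Finset.card_image_le.trans (by simp)).trans_lt hn
  have hind := (h.indepFun_restrict hmeas hs hJ).comp
    (φ := fun v : J → ℝ => ∏ i, v ⟨p i, by simp [J]⟩) (by fun_prop) measurable_id
  refine (hind.integral_fun_mul_eq_mul_integral ?_ (hmeas s).aestronglyMeasurable).trans ?_
  · exact Measurable.aestronglyMeasurable (by fun_prop)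
  · simp [hmean]

lemma integral_weightedSum_pow_mul_eq_zero [DecidableEq ι] [IsFiniteMeasure μ]
    (h : KWiseIndepFun k X μ) (hmeas : ∀ s, Measurable (X s)) (habs : ∀ s ω, |X s ω| = 1)
    {s : ι} (hmean : ∫ ω, X s ω ∂μ = 0) {T : Finset ι} (hs : s ∉ T) (c : ι → ℝ) {n : ℕ}
    (hn : n < k) : ∫ ω, weightedSum c X T ω ^ n * X s ω ∂μ = 0 := by
  simp_rw [weightedSum, Finset.sum_pow', Finset.sum_mul, Finset.prod_mul_distrib, mul_assoc]
  rw [integral_finsetSum]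
  · refine Finset.sum_eq_zero fun p hp => ?_
    have hps : ∀ i, p i ≠ s := fun i hi => hs (hi ▸ Fintype.mem_piFinset.1 hp i)
    rw [integral_const_mul, h.integral_prod_mul_eq_zero hmeas hmean hn p hps, mul_zero]
  · refine fun p _ => Integrable.of_bound (by fun_prop) (∏ i, |c (p i)|) (ae_of_all _ fun ω => ?_)
    simp [habs]

lemma integral_weightedSum_sq [DecidableEq ι] [IsProbabilityMeasure μ] (h : KWiseIndepFun 2 X μ)
    (hmeas : ∀ s, Measurable (X s)) (habs : ∀ s ω, |X s ω| = 1)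
    (hmean : ∀ s, ∫ ω, X s ω ∂μ = 0) (c : ι → ℝ) (T : Finset ι) :
    ∫ ω, weightedSum c X T ω ^ 2 ∂μ = ∑ t ∈ T, c t ^ 2 := by
  induction T using Finset.induction_on with
  | empty => simp [weightedSum]
  | insert s T hs ih =>
    have hexp : ∀ ω, weightedSum c X (insert s T) ω ^ 2
        = weightedSum c X T ω ^ 2 + 2 * c s * (weightedSum c X T ω ^ 1 * X s ω) + c s ^ 2 :=
      fun ω => by
        rw [weightedSum_insert hs]
        linear_combination c s ^ 2 * (by rw [← sq_abs, habs, one_pow] : X s ω ^ 2 = 1)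
    have hZ2 := integrable_weightedSum_pow (μ := μ) hmeas habs c T 2
    have hZX := (integrable_weightedSum_pow_mul (μ := μ) hmeas habs c T 1 s).const_mul (2 * c s)
    simp only [hexp]
    rw [integral_add (hZ2.fun_add hZX) (integrable_const _), integral_add hZ2 hZX,
      integral_const_mul, ih, h.integral_weightedSum_pow_mul_eq_zero hmeas habs (hmean s) hs c
        one_lt_two]
    simp [Finset.sum_insert hs, add_comm]

lemma integral_weightedSum_pow_four [DecidableEq ι] [IsProbabilityMeasure μ]
    (h : KWiseIndepFun 4 X μ) (hmeas : ∀ s, Measurable (X s)) (habs : ∀ s ω, |X s ω| = 1)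
    (hmean : ∀ s, ∫ ω, X s ω ∂μ = 0) (c : ι → ℝ) (T : Finset ι) :
    ∫ ω, weightedSum c X T ω ^ 4 ∂μ = 3 * (∑ t ∈ T, c t ^ 2) ^ 2 - 2 * ∑ t ∈ T, c t ^ 4 := by
  induction T using Finset.induction_on with
  | empty => simp [weightedSum]
  | insert s T hs ih =>
    have hexp : ∀ ω, weightedSum c X (insert s T) ω ^ 4
        = weightedSum c X T ω ^ 4 + 6 * c s ^ 2 * weightedSum c X T ω ^ 2
          + 4 * c s * (weightedSum c X T ω ^ 3 * X s ω)
          + 4 * c s ^ 3 * (weightedSum c X T ω ^ 1 * X s ω) + c s ^ 4 := fun ω => by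
      rw [weightedSum_insert hs]
      linear_combination (c s ^ 4 * (X s ω ^ 2 + 1) + 4 * c s ^ 3 * weightedSum c X T ω * X s ω
        + 6 * c s ^ 2 * weightedSum c X T ω ^ 2) * (by rw [← sq_abs, habs, one_pow] : X s ω ^ 2 = 1)
    have hZ4 := integrable_weightedSum_pow (μ := μ) hmeas habs c T 4
    have hZ2 := (integrable_weightedSum_pow (μ := μ) hmeas habs c T 2).const_mul (6 * c s ^ 2)
    have hZ3X := (integrable_weightedSum_pow_mul (μ := μ) hmeas habs c T 3 s).const_mul (4 * c s)
    have hZX := (integrable_weightedSum_pow_mul (μ := μ) hmeas habs c T 1 s).const_mul (4 * c s ^ 3)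
    simp only [hexp]
    rw [integral_add (((hZ4.fun_add hZ2).fun_add hZ3X).fun_add hZX) (integrable_const _),
      integral_add ((hZ4.fun_add hZ2).fun_add hZ3X) hZX, integral_add (hZ4.fun_add hZ2) hZ3X,
      integral_add hZ4 hZ2, integral_const_mul, integral_const_mul, integral_const_mul, ih,
      (h.mono (by norm_num)).integral_weightedSum_sq hmeas habs hmean,
      h.integral_weightedSum_pow_mul_eq_zero hmeas habs (hmean s) hs c (by norm_num : 3 < 4),
      h.integral_weightedSum_pow_mul_eq_zero hmeas habs (hmean s) hs c (by norm_num : 1 < 4)]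
    simp only [Finset.sum_insert hs, integral_const, probReal_univ, one_smul]
    ring

end KWiseIndepFun

/-- Second moment and variance of the Tug-of-War estimator.  With
`F` drawn from a four-wise independent `±1`-valued hash family,
`Y(S)(ω) = Σ_{s∈S} F s ω`, `d = |A △ B|`, and `D = (Y(A) - Y(B))^2`, we have
`E[D^2] = 3d^2 - 2d` and `Var[D] = 2d^2 - 2d`. -/
theorem stmt6 {U : Type*} [DecidableEq U] {Ω : Type*} [MeasurableSpace Ω]
    (μ : Measure Ω) [IsProbabilityMeasure μ]
    (F : U → Ω → ℝ)
    (hmeas : ∀ s, Measurable (F s))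
    (hval : ∀ s ω, F s ω = 1 ∨ F s ω = -1)
    (hindep : ∀ T : Finset U, T.card ≤ 4 →
      iIndepFun (fun s : T => F s) μ)
    (hunif : ∀ s, μ {ω | F s ω = 1} = 1 / 2)
    (A B : Finset U) (d : ℝ) (hd : d = ((symmDiff A B).card : ℝ)) :
    (∫ ω, ((∑ s ∈ A, F s ω - ∑ s ∈ B, F s ω) ^ 2) ^ 2 ∂μ
        = 3 * d ^ 2 - 2 * d) ∧
    variance (fun ω => (∑ s ∈ A, F s ω - ∑ s ∈ B, F s ω) ^ 2) μ
        = 2 * d ^ 2 - 2 * d := by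
  have hindep4 : KWiseIndepFun 4 F μ := hindep
  have habs : ∀ s ω, |F s ω| = 1 := fun s ω => by rcases hval s ω with h | h <;> simp [h]
  have hmean : ∀ s, ∫ ω, F s ω ∂μ = 0 := fun s =>
    integral_eq_zero_of_pm_one_of_measure_eq_half (hmeas s) (hval s) (hunif s)
  set ε : U → ℝ := fun a => if a ∈ A then 1 else -1
  have hε : ∀ a, ε a ^ 2 = 1 := fun a => by by_cases ha : a ∈ A <;> simp [ε, ha]
  have hε4 : ∀ a, ε a ^ 4 = 1 := fun a => by rw [show 4 = 2 * 2 from rfl, pow_mul, hε, one_pow]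
  set Z := weightedSum ε F (symmDiff A B)
  have hsum : ∀ ω, ∑ s ∈ A, F s ω - ∑ s ∈ B, F s ω = Z ω :=
    fun ω => Finset.sum_sub_sum_eq_sum_symmDiff A B (F · ω)
  have hZ2 : ∫ ω, Z ω ^ 2 ∂μ = d := by
    simpa [hε, ← hd] using (hindep4.mono (by norm_num)).integral_weightedSum_sq hmeas habs hmean ε
      (symmDiff A B)
  have hZ4 : ∫ ω, (Z ω ^ 2) ^ 2 ∂μ = 3 * d ^ 2 - 2 * d := by
    simpa [hε, hε4, ← hd, ← pow_mul] using
      hindep4.integral_weightedSum_pow_four hmeas habs hmean ε (symmDiff A B)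
  have hmem : MemLp (fun ω => Z ω ^ 2) 2 μ := by
    refine (memLp_two_iff_integrable_sq (by unfold Z weightedSum; fun_prop)).2 ?_
    simpa only [← pow_mul] using integrable_weightedSum_pow hmeas habs ε (symmDiff A B) 4
  simp only [hsum]
  refine ⟨hZ4, ?_⟩
  rw [variance_eq_sub hmem, Pi.pow_def, hZ4, hZ2]
  ring
end

section
/- Throw i balls one at a time independently and uniformly at random into n bins. Let M̃(i, j, k) be the probability that exactly j balls are 'bad' (lie in bins containing ≥ 2 balls) and these bad balls occupy exactly k bins. Then M̃(i, j, k) = ((i−j+1)/n)·M̃(i−1, j−2, k−1) + (k/n)·M̃(i−1, j−1, k) + (1 − (i−1−j+k)/n)·M̃(i−1, j, k). -/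
/-!
Bad balls and bad bins are both sums over bins of a function of the bin's occupancy, and
throwing one more ball raises the occupancy of a single bin. Landing in a bin with `c` balls
therefore adds nothing if `c = 0`, two bad balls and one bad bin if `c = 1`, and one bad ball
if `c ≥ 2`. A configuration of `m` balls with `j` bad balls in `k` bad bins has `m - j` bins
with one ball, `k` with at least two and `n - m + j - k` empty ones, so summing over the bin
of the last ball gives a linear recurrence for the counts, and dividing by `n ^ (m + 1)` gives
the one for probabilities.
-/

/-- The set of "bad" balls of an assignment `f` of balls to bins: balls lying
in a bin containing at least two balls. -/
def badBalls {i n : ℕ} (f : Fin i → Fin n) : Finset (Fin i) :=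
  Finset.univ.filter fun b => 2 ≤ (Finset.univ.filter fun b' => f b' = f b).card

/-- The set of "bad" bins: bins occupied by the bad balls. -/
def badBins {i n : ℕ} (f : Fin i → Fin n) : Finset (Fin n) :=
  (badBalls f).image f

/-- `Mtilde n i j k` is the probability that throwing `i` balls independently
and uniformly at random into `n` bins yields exactly `j` bad balls occupying
exactly `k` bad bins. -/
def Mtilde (n i j k : ℕ) : ℚ :=
  ((Finset.univ.filter fun f : Fin i → Fin n =>
      (badBalls f).card = j ∧ (badBins f).card = k).card : ℚ) / (n ^ i : ℚ)

open Finset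

def occupancy {m n : ℕ} (g : Fin m → Fin n) (v : Fin n) : ℕ :=
  #{a | g a = v}

def badCount (n m j k : ℕ) : ℕ :=
  #{f : Fin m → Fin n | #(badBalls f) = j ∧ #(badBins f) = k}

lemma card_filter_fin_snoc {α : Type*} [Fintype α] {m : ℕ} (P : (Fin (m + 1) → α) → Prop)
    [DecidablePred P] : #{f | P f} = ∑ g : Fin m → α, #{b | P (Fin.snoc g b)} := by
  rw [card_filter, ← (Fin.snocEquiv fun _ => α).sum_comp, Fintype.sum_prod_type, sum_comm]
  simp only [card_filter]
  rfl

section Occupancy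

variable {m n : ℕ} (g : Fin m → Fin n)

lemma mem_badBalls_iff {a : Fin m} : a ∈ badBalls g ↔ 2 ≤ occupancy g (g a) := by
  simp [badBalls, occupancy]

lemma sum_occupancy : ∑ v, occupancy g v = m := by
  simpa [occupancy] using
    (card_eq_sum_card_fiberwise (f := g) (s := univ) (t := univ) fun _ _ => mem_univ _).symm

lemma badBins_eq_filter : badBins g = univ.filter fun v => 2 ≤ occupancy g v := by
  ext v
  simp only [badBins, mem_image, mem_filter, mem_univ, true_and, mem_badBalls_iff]
  refine ⟨fun ⟨a, ha, hav⟩ => hav ▸ ha, fun hv => ?_⟩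
  obtain ⟨a, ha⟩ : (univ.filter fun a => g a = v).Nonempty :=
    card_pos.1 (by unfold occupancy at hv; omega)
  rw [mem_filter] at ha
  exact ⟨a, ha.2 ▸ hv, ha.2⟩

lemma card_badBalls_eq_sum :
    #(badBalls g) = ∑ v, if 2 ≤ occupancy g v then occupancy g v else 0 := by
  rw [card_eq_sum_card_fiberwise (f := g) (t := univ) fun _ _ => mem_univ _]
  refine sum_congr rfl fun v _ => ?_
  split_ifs with hv
  · unfold occupancy
    congr 1
    ext a
    simp only [mem_filter, mem_univ, true_and, mem_badBalls_iff, and_iff_right_iff_imp]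
    rintro rfl
    exact hv
  · rw [card_eq_zero, filter_eq_empty_iff]
    rintro a ha rfl
    exact hv ((mem_badBalls_iff g).1 ha)

lemma occupancy_snoc (b : Fin n) :
    occupancy (Fin.snoc g b : Fin (m + 1) → Fin n)
      = Function.update (occupancy g) b (occupancy g b + 1) := by
  ext v
  simp only [occupancy, card_filter, Fin.sum_univ_castSucc, Fin.snoc_castSucc, Fin.snoc_last,
    Function.update_apply]
  by_cases h : v = b
  · simp [h]
  · simp [h, Ne.symm h]

lemma sum_occupancy_snoc {M : Type*} [AddCommMonoid M] (φ : ℕ → M) (b : Fin n) :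
    ∑ v, φ (occupancy (Fin.snoc g b : Fin (m + 1) → Fin n) v) + φ (occupancy g b)
      = ∑ v, φ (occupancy g v) + φ (occupancy g b + 1) := by
  rw [occupancy_snoc, ← add_sum_erase _ _ (mem_univ b), ← add_sum_erase _ _ (mem_univ b),
    Function.update_self]
  have : ∑ v ∈ univ.erase b, φ (Function.update (occupancy g) b (occupancy g b + 1) v)
      = ∑ v ∈ univ.erase b, φ (occupancy g v) :=
    sum_congr rfl fun v hv => by rw [Function.update_of_ne (ne_of_mem_erase hv)]
  rw [this]
  abel

lemma card_badBalls_snoc (b : Fin n) :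
    #(badBalls (Fin.snoc g b : Fin (m + 1) → Fin n))
      = #(badBalls g) + (if occupancy g b = 0 then 0 else 1)
          + (if occupancy g b = 1 then 1 else 0) := by
  have h := sum_occupancy_snoc g (fun c => if 2 ≤ c then c else 0) b
  rw [← card_badBalls_eq_sum, ← card_badBalls_eq_sum] at h
  split_ifs at h ⊢ <;> omega

lemma card_badBins_snoc (b : Fin n) :
    #(badBins (Fin.snoc g b : Fin (m + 1) → Fin n))
      = #(badBins g) + if occupancy g b = 1 then 1 else 0 := by
  have h := sum_occupancy_snoc g (fun c => if 2 ≤ c then 1 else 0) b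
  rw [← card_filter, ← card_filter, ← badBins_eq_filter, ← badBins_eq_filter] at h
  split_ifs at h ⊢ <;> omega

lemma card_occupancy_eq_one_add_card_badBalls :
    #{v | occupancy g v = 1} + #(badBalls g) = m := by
  rw [card_filter, card_badBalls_eq_sum, ← sum_add_distrib]
  refine Eq.trans ?_ (sum_occupancy g)
  exact sum_congr rfl fun v _ => by split_ifs <;> omega

lemma card_occupancy_eq_zero_add_add_card_badBins :
    #{v | occupancy g v = 0} + m + #(badBins g) = n + #(badBalls g) := by
  calc #{v | occupancy g v = 0} + m + #(badBins g)
      = ∑ v, ((if occupancy g v = 0 then 1 else 0) + occupancy g v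
          + if 2 ≤ occupancy g v then 1 else 0) := by
        rw [sum_add_distrib, sum_add_distrib, sum_occupancy, badBins_eq_filter, card_filter,
          card_filter]
    _ = ∑ v, (1 + if 2 ≤ occupancy g v then occupancy g v else 0) :=
        sum_congr rfl fun v _ => by split_ifs <;> omega
    _ = n + #(badBalls g) := by simp [sum_add_distrib, card_badBalls_eq_sum]

end Occupancy

section Recurrence

variable {m n : ℕ} (g : Fin m → Fin n) (j k : ℕ)

lemma card_filter_snoc_badCounts :
    #{b | #(badBalls (Fin.snoc g b : Fin (m + 1) → Fin n)) = j + 2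
        ∧ #(badBins (Fin.snoc g b : Fin (m + 1) → Fin n)) = k + 1}
      = (if #(badBalls g) = j ∧ #(badBins g) = k then #{v | occupancy g v = 1} else 0)
        + (if #(badBalls g) = j + 1 ∧ #(badBins g) = k + 1
            then #{v | 2 ≤ occupancy g v} else 0)
        + (if #(badBalls g) = j + 2 ∧ #(badBins g) = k + 1
            then #{v | occupancy g v = 0} else 0) := by
  simp only [card_filter, ite_sum_zero, ← sum_add_distrib]
  refine sum_congr rfl fun b _ => ?_
  rw [card_badBalls_snoc, card_badBins_snoc]
  split_ifs <;> omega

lemma cast_card_filter_snoc_badCounts :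
    (#{b | #(badBalls (Fin.snoc g b : Fin (m + 1) → Fin n)) = j + 2
        ∧ #(badBins (Fin.snoc g b : Fin (m + 1) → Fin n)) = k + 1} : ℚ)
      = (if #(badBalls g) = j ∧ #(badBins g) = k then (m - j : ℚ) else 0)
        + (if #(badBalls g) = j + 1 ∧ #(badBins g) = k + 1 then (k + 1 : ℚ) else 0)
        + (if #(badBalls g) = j + 2 ∧ #(badBins g) = k + 1
            then (n - m + j - k + 1 : ℚ) else 0) := by
  have h1 : (#{v | occupancy g v = 1} : ℚ) = m - #(badBalls g) := by
    rw [eq_sub_iff_add_eq]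
    exact_mod_cast card_occupancy_eq_one_add_card_badBalls g
  have h0 : (#{v | occupancy g v = 0} : ℚ) = n - m + #(badBalls g) - #(badBins g) := by
    have h := congrArg (Nat.cast (R := ℚ)) (card_occupancy_eq_zero_add_add_card_badBins g)
    push_cast at h
    linarith
  rw [card_filter_snoc_badCounts, ← badBins_eq_filter]
  push_cast [h0, h1]
  refine congr_arg₂ (· + ·) (congr_arg₂ (· + ·) ?_ ?_) ?_ <;>
    exact ite_congr rfl (fun h => by push_cast [h.1, h.2]; ring) (fun _ => rfl)

end Recurrence

lemma badCount_succ (n m j k : ℕ) :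
    (badCount n (m + 1) (j + 2) (k + 1) : ℚ)
      = (m - j) * badCount n m j k + (k + 1) * badCount n m (j + 1) (k + 1)
        + (n - m + j - k + 1) * badCount n m (j + 2) (k + 1) := by
  simp only [badCount, card_filter_fin_snoc, Nat.cast_sum, cast_card_filter_snoc_badCounts,
    sum_add_distrib, ← sum_filter, sum_const, nsmul_eq_mul]
  ring

lemma Mtilde_eq_badCount_div (n m j k : ℕ) : Mtilde n m j k = badCount n m j k / n ^ m := rfl

/-- The recurrence relation satisfied by `M̃(i, j, k)`, obtained
by throwing the `i`-th ball "in slow motion". -/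
theorem stmt11 (n i j k : ℕ) (hn : 0 < n) (hi : 1 ≤ i) (hj : 2 ≤ j) (hk : 1 ≤ k) :
    Mtilde n i j k
      = ((i : ℚ) - (j : ℚ) + 1) / (n : ℚ) * Mtilde n (i - 1) (j - 2) (k - 1)
        + (k : ℚ) / (n : ℚ) * Mtilde n (i - 1) (j - 1) k
        + (1 - ((i : ℚ) - 1 - (j : ℚ) + (k : ℚ)) / (n : ℚ)) * Mtilde n (i - 1) j k := by
  obtain ⟨m, rfl⟩ : ∃ m, i = m + 1 := ⟨i - 1, by omega⟩
  obtain ⟨j, rfl⟩ : ∃ j', j = j' + 2 := ⟨j - 2, by omega⟩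
  obtain ⟨k, rfl⟩ : ∃ k', k = k' + 1 := ⟨k - 1, by omega⟩
  have hn' : (n : ℚ) ≠ 0 := by positivity
  simp only [Nat.add_sub_cancel, Mtilde_eq_badCount_div, badCount_succ]
  field_simp
  push_cast
  ring
end
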